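/- arXiv:1305.6287 — 2 statements merged into one kernel-verified Lean document; each statement's English description precedes it below -/
import Mathlib

section
/- Let m ≥ 3 be odd and n = (p_1 ⋯ p_m)^α for distinct primes p_i and α ≥ 1. Then the clique number and chromatic number of G(Z/nZ) both equal (∑_{i=0}^{⌊m/2⌋} C(m,i) α^{m-i}) − 1. -/
/-- The intersection graph of ideals of a ring: vertices are the proper
non-trivial ideals, two distinct ideals are adjacent iff their intersection
is non-zero. -/
def interGraph (R : Type*) [CommRing R] : SimpleGraph {I : Ideal R // I ≠ ⊥ ∧ I ≠ ⊤} where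
  Adj I J := I ≠ J ∧ I.1 ⊓ J.1 ≠ ⊥
  symm := ⟨by rintro I J ⟨h1, h2⟩; exact ⟨h1.symm, by rwa [inf_comm]⟩⟩
  loopless := ⟨by rintro I ⟨h, -⟩; exact h rfl⟩

/-- Degree of a vertex. -/
noncomputable def vdeg {V : Type*} (G : SimpleGraph V) (v : V) : ℕ :=
  Nat.card {w // G.Adj v w}

/-- Maximum degree. -/
noncomputable def maxDeg {V : Type*} (G : SimpleGraph V) : ℕ := ⨆ v, vdeg G v

/-- Edge chromatic number (chromatic index), as the chromatic number of the line graph. -/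
noncomputable def edgeChrom {V : Type*} (G : SimpleGraph V) : ℕ∞ :=
  (SimpleGraph.lineGraph G).chromaticNumber

/-- The intersection graph of non-empty proper subsets of `Fin m`. -/
def subsetGraph (m : ℕ) : SimpleGraph {S : Finset (Fin m) // S ≠ ∅ ∧ S ≠ Finset.univ} where
  Adj S T := S ≠ T ∧ (S.1 ∩ T.1).Nonempty
  symm := ⟨by rintro S T ⟨h1, h2⟩; exact ⟨h1.symm, by rwa [Finset.inter_comm]⟩⟩
  loopless := ⟨by rintro S ⟨h, -⟩; exact h rfl⟩

/-!
By the Chinese remainder theorem the ideals of `ZMod (∏ pᵢ ^ α)` form the lattice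
`Fin m → Fin (α + 1)`: coordinate `i` records the ideal of `ZMod (pᵢ ^ α)`, `0` being the zero
ideal, and meets are taken coordinatewise. Two ideals therefore meet nontrivially iff their sets
of zero coordinates do not cover all `m` coordinates.

Since `m` is odd, the vectors with at most `m / 2` zero coordinates (other than `⊤`) form a clique;
there are `m.choose i * α ^ (m - i)` vectors with exactly `i` zero coordinates.
The remaining vertices are coloured by this clique: a vector `a` whose zero set `Z` has more than
`m / 2` elements is sent to a vector with zero set exactly `Zᶜ`, injectively for each `Z`, which is
possible because there are `α ^ (m - #Z) ≤ α ^ #Z` vectors with zero set `Z`. Two vertices of the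
same colour then have zero sets covering everything, so are not adjacent. Hence the clique number
and the chromatic number both equal the size of that clique.
-/

open Finset

def meetGraph (L : Type*) [Lattice L] [BoundedOrder L] :
    SimpleGraph {a : L // a ≠ ⊥ ∧ a ≠ ⊤} where
  Adj a b := a ≠ b ∧ a.1 ⊓ b.1 ≠ ⊥
  symm := ⟨fun _ _ h => ⟨h.1.symm, by rw [inf_comm]; exact h.2⟩⟩
  loopless := ⟨fun _ h => h.1 rfl⟩

def OrderIso.meetGraphIso {L L' : Type*} [Lattice L] [BoundedOrder L] [Lattice L']
    [BoundedOrder L'] (e : L ≃o L') : meetGraph L ≃g meetGraph L' where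
  toEquiv := e.toEquiv.subtypeEquiv fun a => by simp
  map_rel_iff' := by
    rintro ⟨a, ha⟩ ⟨b, hb⟩
    change (_ ≠ _ ∧ e a ⊓ e b ≠ ⊥) ↔ (_ ≠ _ ∧ a ⊓ b ≠ ⊥)
    rw [← e.map_inf]
    simp only [map_eq_bot_iff, Ne, EmbeddingLike.apply_eq_iff_eq]

def OrderIso.piCongrRight {ι : Type*} {α β : ι → Type*} [∀ i, Preorder (α i)]
    [∀ i, Preorder (β i)] (e : ∀ i, α i ≃o β i) : (∀ i, α i) ≃o ∀ i, β i where
  toEquiv := Equiv.piCongrRight fun i => (e i).toEquiv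
  map_rel_iff' := by simp [Pi.le_def]

namespace SimpleGraph

variable {V W : Type*} {G : SimpleGraph V} {H : SimpleGraph W}

theorem IsNClique.map_iso (f : G ≃g H) {n : ℕ} {s : Finset V} (hs : G.IsNClique n s) :
    H.IsNClique n (s.map f.toEquiv.toEmbedding) := by
  refine ⟨?_, by rw [card_map, hs.card_eq]⟩
  rw [isClique_iff, coe_map, Set.InjOn.pairwise_image f.toEquiv.toEmbedding.injective.injOn]
  exact fun x hx y hy hxy => f.map_adj_iff.2 (hs.isClique hx hy hxy)

theorem cliqueNum_congr (f : G ≃g H) : G.cliqueNum = H.cliqueNum := by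
  unfold cliqueNum
  congr 1
  ext n
  exact ⟨fun ⟨s, hs⟩ => ⟨_, hs.map_iso f⟩, fun ⟨s, hs⟩ => ⟨_, hs.map_iso f.symm⟩⟩

theorem cliqueNum_eq_and_chromaticNumber_eq_of_isClique_of_colorable [Finite V]
    {s : Finset V} (hs : G.IsClique s) (hc : G.Colorable #s) :
    G.cliqueNum = #s ∧ G.chromaticNumber = #s := by
  obtain ⟨t, ht⟩ := G.exists_isNClique_cliqueNum
  refine ⟨le_antisymm ?_ hs.card_le_cliqueNum,
    le_antisymm hc.chromaticNumber_le hs.card_le_chromaticNumber⟩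
  rw [← ht.card_eq]
  exact ht.isClique.card_le_of_colorable hc

end SimpleGraph

theorem Finset.exists_mapsTo_injOn_of_card_le {α β : Type*} [Nonempty β] {s : Finset α}
    {t : Finset β} (h : #s ≤ #t) : ∃ f : α → β, Set.MapsTo f s t ∧ Set.InjOn f s := by
  classical
  obtain ⟨e⟩ := Function.Embedding.nonempty_of_card_le (α := s) (β := t) (by simpa using h)
  refine ⟨fun x => if hx : x ∈ s then e ⟨x, hx⟩ else Classical.arbitrary β, fun x hx => ?_,
    fun x hx y hy hxy => ?_⟩
  · simp [dif_pos (mem_coe.1 hx)]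
  · simp only [mem_coe] at hx hy
    simp only [dif_pos hx, dif_pos hy, ← Subtype.ext_iff, e.injective.eq_iff] at hxy
    exact congrArg Subtype.val hxy

namespace ZMod

variable {N : ℕ}

theorem span_natCast_le_span_natCast_iff {d e : ℕ} (he : e ∣ N) :
    Ideal.span {(d : ZMod N)} ≤ Ideal.span {(e : ZMod N)} ↔ e ∣ d := by
  rw [Ideal.span_singleton_le_span_singleton]
  refine ⟨fun h => ?_, Nat.cast_dvd_cast⟩
  have h' := map_dvd (ZMod.castHom he (ZMod e)) h
  rwa [map_natCast, map_natCast, ZMod.natCast_self, zero_dvd_iff,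
    ZMod.natCast_eq_zero_iff] at h'

theorem exists_dvd_and_eq_span_natCast (I : Ideal (ZMod N)) :
    ∃ d, d ∣ N ∧ I = Ideal.span {(d : ZMod N)} := by
  set f := Int.castRingHom (ZMod N)
  obtain ⟨g, hg⟩ := (IsPrincipalIdealRing.principal (I.comap f)).principal
  change _ = Ideal.span {g} at hg
  rw [← Int.span_natAbs] at hg
  have hN : (N : ℤ) ∈ I.comap f := by simp [Ideal.mem_comap, f]
  rw [hg, Ideal.mem_span_singleton, Int.natCast_dvd_natCast] at hN
  refine ⟨g.natAbs, hN, ?_⟩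
  rw [← Ideal.map_comap_of_surjective f ZMod.intCast_surjective I, hg, Ideal.map_span,
    Set.image_singleton, map_natCast]

/-- `j ↦ (p ^ (k - j))`, so that `0` goes to the zero ideal. -/
noncomputable def finOrderIsoIdealPrimePow {p : ℕ} (hp : p.Prime) (k : ℕ) :
    Fin (k + 1) ≃o Ideal (ZMod (p ^ k)) :=
  RelIso.ofSurjective
    (OrderEmbedding.ofMapLEIff (fun j => Ideal.span {((p ^ (k - j : ℕ) : ℕ) : ZMod (p ^ k))})
      fun a b => by
        rw [span_natCast_le_span_natCast_iff (Nat.pow_dvd_pow p (Nat.sub_le k b)),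
          Nat.pow_dvd_pow_iff_le_right hp.one_lt, Fin.le_iff_val_le_val]
        omega)
    fun I => by
      obtain ⟨d, hd, rfl⟩ := exists_dvd_and_eq_span_natCast I
      obtain ⟨j, hj, rfl⟩ := (Nat.dvd_prime_pow hp).1 hd
      exact ⟨⟨k - j, by omega⟩, by simp [Nat.sub_sub_self hj]⟩

noncomputable def idealOrderIsoPiFin {ι : Type*} [Fintype ι] {p : ι → ℕ}
    (hp : ∀ i, (p i).Prime) (hinj : Function.Injective p) (k : ℕ) :
    Ideal (ZMod (∏ i, p i ^ k)) ≃o (ι → Fin (k + 1)) :=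
  (prodEquivPi (fun i => p i ^ k) fun i j hij =>
      Nat.Coprime.pow k k ((Nat.coprime_primes (hp i) (hp j)).2 (hinj.ne hij))).symm
    |>.idealComapOrderIso.trans <|
    Ideal.piOrderIso.trans (OrderIso.piCongrRight fun i => (finOrderIsoIdealPrimePow (hp i) k).symm)

end ZMod

section ZeroCoords

variable {ι : Type*} [Fintype ι] {α : ℕ}

def zeroCoords (a : ι → Fin (α + 1)) : Finset ι := {i | a i = 0}

theorem eq_bot_iff_zeroCoords_eq_univ (a : ι → Fin (α + 1)) : a = ⊥ ↔ zeroCoords a = univ := by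
  simp [funext_iff, eq_univ_iff_forall, zeroCoords, bot_eq_zero]

theorem zeroCoords_top (hα : 1 ≤ α) : zeroCoords (⊤ : ι → Fin (α + 1)) = ∅ := by
  simp [zeroCoords, Fin.top_eq_last, Fin.ext_iff, Nat.one_le_iff_ne_zero.1 hα]

variable [DecidableEq ι]

local notation "Vtx" => {a : ι → Fin (α + 1) // a ≠ ⊥ ∧ a ≠ ⊤}

theorem inf_eq_bot_iff_zeroCoords_union (a b : ι → Fin (α + 1)) :
    a ⊓ b = ⊥ ↔ zeroCoords a ∪ zeroCoords b = univ := by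
  simp [funext_iff, eq_univ_iff_forall, zeroCoords, bot_eq_zero]

theorem card_filter_zeroCoords_eq (Z : Finset ι) :
    #{a : ι → Fin (α + 1) | zeroCoords a = Z} = α ^ #Zᶜ := by
  have : ({a | zeroCoords a = Z} : Finset (ι → Fin (α + 1))) =
      Fintype.piFinset fun i => if i ∈ Zᶜ then {0}ᶜ else {0} := by
    ext a
    simp only [zeroCoords, mem_filter, mem_univ, true_and, Finset.ext_iff, Fintype.mem_piFinset]
    refine forall_congr' fun i => ?_
    split_ifs with h <;> simp_all
  rw [this, Fintype.card_piFinset, ← prod_const, ← Fintype.prod_ite_mem Zᶜ (fun _ => α)]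
  exact Fintype.prod_congr _ _ fun i => by split_ifs <;> simp [card_compl]

theorem card_filter_card_zeroCoords_eq (i : ℕ) :
    #{a : ι → Fin (α + 1) | #(zeroCoords a) = i} =
      (Fintype.card ι).choose i * α ^ (Fintype.card ι - i) := by
  rw [card_eq_sum_card_fiberwise (f := zeroCoords) (t := powersetCard i univ)
    (fun a ha => by simpa using ha)]
  rw [sum_congr rfl fun Z hZ => ?_, sum_const, card_powersetCard, card_univ, smul_eq_mul]
  obtain ⟨-, rfl⟩ := mem_powersetCard.1 hZ
  rw [← card_compl, ← card_filter_zeroCoords_eq]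
  congr 1
  ext a
  simp only [mem_filter, mem_univ, true_and, and_iff_right_iff_imp]
  rintro rfl
  rfl

theorem card_filter_card_zeroCoords_le (k : ℕ) :
    #{a : ι → Fin (α + 1) | #(zeroCoords a) ≤ k} =
      ∑ i ∈ range (k + 1), (Fintype.card ι).choose i * α ^ (Fintype.card ι - i) := by
  rw [card_eq_sum_card_fiberwise (f := fun a => #(zeroCoords a)) (t := range (k + 1))
    (fun a ha => by simpa [Nat.lt_succ_iff] using ha)]
  refine sum_congr rfl fun i hi => ?_
  rw [filter_filter, ← card_filter_card_zeroCoords_eq]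
  congr 1
  ext a
  simp only [mem_filter, mem_univ, true_and, and_iff_right_iff_imp]
  rintro rfl
  simpa [Nat.lt_succ_iff] using hi

theorem exists_fiberwise_injective_zeroCoords_compl (hα : 1 ≤ α) :
    ∃ ψ : (ι → Fin (α + 1)) → ι → Fin (α + 1), ∀ a, Fintype.card ι / 2 < #(zeroCoords a) →
      zeroCoords (ψ a) = (zeroCoords a)ᶜ ∧
        ∀ b, zeroCoords b = zeroCoords a → ψ b = ψ a → b = a := by
  have (Z : Finset ι) : ∃ φ : (ι → Fin (α + 1)) → ι → Fin (α + 1),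
      Fintype.card ι / 2 < #Z → Set.MapsTo φ {a | zeroCoords a = Z} {a | zeroCoords a = Zᶜ} ∧
        Set.InjOn φ {a | zeroCoords a = Z} := by
    by_cases hZ : Fintype.card ι / 2 < #Z
    · obtain ⟨φ, hmaps, hinj⟩ := exists_mapsTo_injOn_of_card_le
        (s := {a : ι → Fin (α + 1) | zeroCoords a = Z}) (t := {a | zeroCoords a = Zᶜ}) (by
          rw [card_filter_zeroCoords_eq, card_filter_zeroCoords_eq, compl_compl, card_compl]
          exact Nat.pow_le_pow_right hα (by omega))
      exact ⟨φ, fun _ => ⟨by simpa using hmaps, by simpa using hinj⟩⟩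
    · exact ⟨id, fun h => absurd h hZ⟩
  choose Φ hΦ using this
  refine ⟨fun a => Φ (zeroCoords a) a, fun a ha => ⟨(hΦ _ ha).1 rfl, fun b hb hba => ?_⟩⟩
  dsimp only at hba
  rw [hb] at hba
  exact (hΦ _ ha).2 hb rfl hba

variable (ι α) in
noncomputable def fewZerosVertices : Finset Vtx :=
  {v | #(zeroCoords v.1) ≤ Fintype.card ι / 2}

theorem notMem_fewZerosVertices {v : Vtx} :
    v ∉ fewZerosVertices ι α ↔ Fintype.card ι / 2 < #(zeroCoords v.1) := by
  simp [fewZerosVertices]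

theorem isClique_fewZerosVertices (hodd : Odd (Fintype.card ι)) :
    (meetGraph (ι → Fin (α + 1))).IsClique (fewZerosVertices ι α : Set _) := by
  intro v hv w hw hvw
  simp only [fewZerosVertices, coe_filter, mem_univ, true_and, Set.mem_ofPred_eq] at hv hw
  refine ⟨hvw, fun h => ?_⟩
  have := card_union_le (zeroCoords v.1) (zeroCoords w.1)
  rw [(inf_eq_bot_iff_zeroCoords_union _ _).1 h, card_univ] at this
  obtain ⟨k, hk⟩ := hodd
  omega

theorem card_fewZerosVertices (hα : 1 ≤ α) (hodd : Odd (Fintype.card ι)) :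
    #(fewZerosVertices ι α) = (∑ i ∈ range (Fintype.card ι / 2 + 1),
      (Fintype.card ι).choose i * α ^ (Fintype.card ι - i)) - 1 := by
  have htop : (⊤ : ι → Fin (α + 1)) ∈ ({a | #(zeroCoords a) ≤ Fintype.card ι / 2} : Finset _) := by
    simp [zeroCoords_top hα]
  rw [← card_filter_card_zeroCoords_le, ← card_erase_of_mem htop]
  refine card_bij (fun v _ => v.1) (fun v hv => ?_) (fun v _ w _ => Subtype.ext) fun a ha => ?_
  · simp only [fewZerosVertices, mem_filter, mem_univ, true_and] at hv
    simpa [v.2.2] using hv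
  · simp only [mem_erase, mem_filter, mem_univ, true_and] at ha
    have hbot : a ≠ ⊥ := by
      rw [Ne, eq_bot_iff_zeroCoords_eq_univ]
      rintro h
      rw [h, card_univ] at ha
      obtain ⟨k, hk⟩ := hodd
      omega
    exact ⟨⟨a, hbot, ha.1⟩, by simpa [fewZerosVertices] using ha.2, rfl⟩

theorem exists_recoloring_into_fewZerosVertices (hα : 1 ≤ α) :
    ∃ ψ : Vtx → Vtx, ∀ v ∉ fewZerosVertices ι α, ψ v ∈ fewZerosVertices ι α ∧
        zeroCoords (ψ v).1 = (zeroCoords v.1)ᶜ ∧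
          ∀ w ∉ fewZerosVertices ι α, ψ w = ψ v → w = v := by
  obtain ⟨ψ, hψ⟩ := exists_fiberwise_injective_zeroCoords_compl (ι := ι) hα
  have hψ_vertex (v : Vtx) (hv : v ∉ fewZerosVertices ι α) : ψ v.1 ≠ ⊥ ∧ ψ v.1 ≠ ⊤ := by
    rw [notMem_fewZerosVertices] at hv
    rw [Ne, Ne, eq_bot_iff_zeroCoords_eq_univ, (hψ v.1 hv).1, compl_eq_univ_iff,
      ← not_nonempty_iff_eq_empty, ← card_pos]
    refine ⟨by omega, fun h => v.2.1 ?_⟩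
    rw [eq_bot_iff_zeroCoords_eq_univ, ← compl_eq_empty_iff, ← (hψ v.1 hv).1, h, zeroCoords_top hα]
  refine ⟨fun v => if h : ψ v.1 ≠ ⊥ ∧ ψ v.1 ≠ ⊤ then ⟨ψ v.1, h⟩ else v, fun v hv => ?_⟩
  simp only [dif_pos (hψ_vertex v hv)]
  have hZ := (hψ v.1 (notMem_fewZerosVertices.1 hv)).1
  refine ⟨?_, hZ, fun w hw hwv => ?_⟩
  · rw [fewZerosVertices, mem_filter, hZ, card_compl]
    have := notMem_fewZerosVertices.1 hv
    exact ⟨mem_univ _, by omega⟩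
  · simp only [dif_pos (hψ_vertex w hw), Subtype.mk.injEq] at hwv
    have hZw := (hψ w.1 (notMem_fewZerosVertices.1 hw)).1
    refine Subtype.ext ((hψ v.1 (notMem_fewZerosVertices.1 hv)).2 w.1 ?_ hwv)
    rw [← compl_inj_iff, ← hZ, ← hZw, hwv]

theorem colorable_fewZerosVertices (hα : 1 ≤ α) :
    (meetGraph (ι → Fin (α + 1))).Colorable #(fewZerosVertices ι α) := by
  obtain ⟨ψ, hψ⟩ := exists_recoloring_into_fewZerosVertices (ι := ι) hα
  have hdisjoint (v w : Vtx) (hw : w ∉ fewZerosVertices ι α) (h : v = ψ w) :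
      v.1 ⊓ w.1 = ⊥ := by
    rw [inf_eq_bot_iff_zeroCoords_union, h, (hψ w hw).2.1, union_comm, union_compl]
  let c (v : Vtx) : fewZerosVertices ι α :=
    if hv : v ∈ fewZerosVertices ι α then ⟨v, hv⟩ else ⟨ψ v, (hψ v hv).1⟩
  have hc (v) : (c v : Vtx) = if v ∈ fewZerosVertices ι α then v else ψ v := by
    unfold c; split_ifs <;> rfl
  have hvalid {v w} (hvw : (meetGraph (ι → Fin (α + 1))).Adj v w) : c v ≠ c w := by
    obtain ⟨hne, hmeet⟩ := hvw
    intro hcvw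
    have hval := congrArg Subtype.val hcvw
    simp only [hc] at hval
    split_ifs at hval with hv hw hw
    · exact hne hval
    · exact hmeet (hdisjoint v w hw hval)
    · exact hmeet (inf_comm v.1 w.1 ▸ hdisjoint w v hv hval.symm)
    · exact hne ((hψ w hw).2.2 v hv hval)
  simpa using (SimpleGraph.Coloring.mk c hvalid).colorable

end ZeroCoords

theorem stmt8_general (m α : ℕ) (hodd : Odd m) (hα : 1 ≤ α)
    (p : Fin m → ℕ) (hp : ∀ i, (p i).Prime) (hinj : Function.Injective p)
    (n : ℕ) (hn : n = ∏ i, p i ^ α) :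
    (interGraph (ZMod n)).cliqueNum =
      (∑ i ∈ Finset.range (m / 2 + 1), m.choose i * α ^ (m - i)) - 1 ∧
    (interGraph (ZMod n)).chromaticNumber =
      (((∑ i ∈ Finset.range (m / 2 + 1), m.choose i * α ^ (m - i)) - 1 : ℕ) : ℕ∞) := by
  subst hn
  -- `interGraph R` is `meetGraph (Ideal R)` by definition.
  have e : interGraph (ZMod (∏ i, p i ^ α)) ≃g meetGraph (Fin m → Fin (α + 1)) :=
    (ZMod.idealOrderIsoPiFin hp hinj α).meetGraphIso
  have hodd' : Odd (Fintype.card (Fin m)) := by rwa [Fintype.card_fin]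
  obtain ⟨hω, hχ⟩ := SimpleGraph.cliqueNum_eq_and_chromaticNumber_eq_of_isClique_of_colorable
    (isClique_fewZerosVertices hodd') (colorable_fewZerosVertices hα)
  rw [card_fewZerosVertices hα hodd', Fintype.card_fin] at hω hχ
  exact ⟨(SimpleGraph.cliqueNum_congr e).trans hω, (SimpleGraph.chromaticNumber_congr e).trans hχ⟩

theorem stmt8 (m α : ℕ) (hm : 3 ≤ m) (hodd : Odd m) (hα : 1 ≤ α)
    (p : Fin m → ℕ) (hp : ∀ i, (p i).Prime) (hinj : Function.Injective p)
    (n : ℕ) (hn : n = ∏ i, p i ^ α) :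
    (interGraph (ZMod n)).cliqueNum =
      (∑ i ∈ Finset.range (m / 2 + 1), m.choose i * α ^ (m - i)) - 1 ∧
    (interGraph (ZMod n)).chromaticNumber =
      (((∑ i ∈ Finset.range (m / 2 + 1), m.choose i * α ^ (m - i)) - 1 : ℕ) : ℕ∞) :=
  stmt8_general m α hodd hα p hp hinj n hn
end

section
/- If n = p^m is a prime power with m odd, m ≥ 3, then χ′(G(Z/nZ)) = Δ(G(Z/nZ)) = m − 2. -/
/-! Every ideal of `ZMod n` is the image of an ideal `dℤ ⊇ nℤ`, so the ideals of `ZMod n`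
correspond to the divisors of `n`. For `n = p ^ m` the divisors form a chain, hence so do the
ideals: any two nonzero ideals meet nontrivially and `G(ℤ/p^mℤ)` is the complete graph on its
`m - 1` vertices. Since `m` is odd this number is even, and `K_{2k}` is edge-coloured with
`2k - 1` colours by the round-robin schedule, while the star at a vertex needs `Δ` colours. -/

lemma Nat.card_subtype_ne_and_ne {α : Type*} [Finite α] {a b : α} (hab : a ≠ b) :
    Nat.card {x // x ≠ a ∧ x ≠ b} = Nat.card α - 2 := by
  have h : {x | x ≠ a ∧ x ≠ b} = {a, b}ᶜ := by ext; simp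
  rw [← Set.ncard_pair hab, ← Set.ncard_compl, ← h]
  rfl

namespace ZMod

section Ideals
variable {n : ℕ}

lemma span_natCast_eq_map (d : ℕ) :
    Ideal.span {(d : ZMod n)} = (Ideal.span {(d : ℤ)}).map (Int.castRingHom (ZMod n)) := by
  rw [Ideal.map_span, Set.image_singleton, eq_intCast, Int.cast_natCast]

lemma exists_ideal_eq_span_natCast (I : Ideal (ZMod n)) :
    ∃ d, d ∣ n ∧ I = Ideal.span {(d : ZMod n)} := by
  obtain ⟨g, hg⟩ := IsPrincipalIdealRing.principal (I.comap (Int.castRingHom (ZMod n)))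
  have hn : (n : ℤ) ∈ I.comap (Int.castRingHom (ZMod n)) := by simp
  rw [hg, Submodule.mem_span_singleton] at hn
  refine ⟨g.natAbs, Int.natAbs_dvd_natAbs.mpr (Dvd.intro_left _ hn.choose_spec), ?_⟩
  rw [span_natCast_eq_map, Int.span_natAbs, ← Ideal.submodule_span_eq, ← hg,
    Ideal.map_comap_of_surjective _ ZMod.intCast_surjective]

lemma comap_span_natCast {d : ℕ} (hd : d ∣ n) :
    (Ideal.span {(d : ZMod n)}).comap (Int.castRingHom (ZMod n)) = Ideal.span {(d : ℤ)} := by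
  rw [span_natCast_eq_map, Ideal.comap_map_of_surjective' _ ZMod.intCast_surjective,
    ZMod.ker_intCastRingHom, sup_eq_left, Ideal.span_singleton_le_span_singleton]
  exact_mod_cast hd

lemma injOn_span_natCast : Set.InjOn (fun d : ℕ ↦ Ideal.span {(d : ZMod n)}) {d | d ∣ n} := by
  intro a ha b hb hab
  have h := congrArg (Ideal.comap (Int.castRingHom (ZMod n))) hab
  simp only [comap_span_natCast ha, comap_span_natCast hb] at h
  simpa using Int.associated_iff_natAbs.mp (Ideal.span_singleton_eq_span_singleton.mp h)

lemma card_ideal [NeZero n] : Nat.card (Ideal (ZMod n)) = n.divisors.card := by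
  have himage : (fun d : ℕ ↦ Ideal.span {(d : ZMod n)}) '' n.divisors = Set.univ := by
    refine Set.eq_univ_of_forall fun I ↦ ?_
    obtain ⟨d, hd, rfl⟩ := exists_ideal_eq_span_natCast I
    exact ⟨d, Nat.mem_divisors.mpr ⟨hd, NeZero.ne n⟩, rfl⟩
  rw [← Set.ncard_univ, ← himage, Set.InjOn.ncard_image, Set.ncard_coe_finset]
  exact injOn_span_natCast.mono fun d hd ↦ Nat.dvd_of_mem_divisors hd

end Ideals

section PrimePower
variable {p m : ℕ}

lemma ideal_le_total_of_prime_pow (hp : p.Prime) (I J : Ideal (ZMod (p ^ m))) :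
    I ≤ J ∨ J ≤ I := by
  obtain ⟨d, hd, rfl⟩ := exists_ideal_eq_span_natCast I
  obtain ⟨e, he, rfl⟩ := exists_ideal_eq_span_natCast J
  obtain ⟨a, -, rfl⟩ := (Nat.dvd_prime_pow hp).mp hd
  obtain ⟨b, -, rfl⟩ := (Nat.dvd_prime_pow hp).mp he
  simp only [Ideal.span_singleton_le_span_singleton, Nat.cast_pow]
  exact (le_total b a).imp (pow_dvd_pow _) (pow_dvd_pow _)

lemma card_ideal_prime_pow (hp : p.Prime) : Nat.card (Ideal (ZMod (p ^ m))) = m + 1 := by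
  have : NeZero (p ^ m) := ⟨pow_ne_zero _ hp.ne_zero⟩
  rw [card_ideal, Nat.divisors_prime_pow hp, Finset.card_map, Finset.card_range]

lemma card_nontrivial_proper_ideal_prime_pow (hp : p.Prime) (hm : m ≠ 0) :
    Nat.card {I : Ideal (ZMod (p ^ m)) // I ≠ ⊥ ∧ I ≠ ⊤} = m - 1 := by
  have : Fact (1 < p ^ m) := ⟨Nat.one_lt_pow hm hp.one_lt⟩
  rw [Nat.card_subtype_ne_and_ne bot_ne_top, card_ideal_prime_pow hp]
  omega

end PrimePower

end ZMod

lemma interGraph_eq_top_of_le_total {R : Type*} [CommRing R]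
    (h : ∀ I J : Ideal R, I ≤ J ∨ J ≤ I) : interGraph R = ⊤ := by
  ext I J
  simp only [interGraph, SimpleGraph.top_adj, and_iff_left_iff_imp]
  intro _
  rcases h I J with hIJ | hJI
  · rw [inf_eq_left.mpr hIJ]; exact I.2.1
  · rw [inf_eq_right.mpr hJI]; exact J.2.1

open SimpleGraph

section EdgeColoring
variable {V α : Type*}

lemma vdeg_le_edgeChrom (G : SimpleGraph V) (v : V) : (vdeg G v : ℕ∞) ≤ edgeChrom G := by
  refine le_chromaticNumber_of_pairwise_adj le_rfl
    (fun w : {w // G.Adj v w} ↦ (⟨s(v, w), G.mem_edgeSet.mpr w.2⟩ : G.edgeSet))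
    fun w w' hww' ↦ ?_
  refine lineGraph_adj_iff_exists.mpr
    ⟨fun h ↦ hww' (Subtype.ext ?_), v, Sym2.mem_mk_left _ _, Sym2.mem_mk_left _ _⟩
  exact Sym2.congr_right.mp (congrArg Subtype.val h)

lemma maxDeg_le_edgeChrom (G : SimpleGraph V) : (maxDeg G : ℕ∞) ≤ edgeChrom G := by
  cases h : edgeChrom G with
  | top => exact le_top
  | coe k =>
    exact_mod_cast ciSup_le' fun v ↦ by exact_mod_cast h ▸ vdeg_le_edgeChrom G v

lemma edgeChrom_le_card_of_symm_of_injective [Fintype α] (G : SimpleGraph V) (c : V → V → α)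
    (hc : ∀ a b, c a b = c b a)
    (hinj : ∀ v a b, v ≠ a → v ≠ b → c v a = c v b → a = b) :
    edgeChrom G ≤ Fintype.card α := by
  refine Colorable.chromaticNumber_le
    (Coloring.mk (fun e : G.edgeSet ↦ Sym2.lift ⟨c, hc⟩ e.1) ?_).colorable
  rintro ⟨e, he⟩ ⟨e', he'⟩ hadj
  obtain ⟨hne, v, hv, hv'⟩ := lineGraph_adj_iff_exists.mp hadj
  obtain ⟨a, rfl⟩ := Sym2.mem_iff_exists.mp hv
  obtain ⟨b, rfl⟩ := Sym2.mem_iff_exists.mp hv'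
  intro hab
  obtain rfl := hinj v a b (G.ne_of_adj he) (G.ne_of_adj he') hab
  exact hne rfl

end EdgeColoring

namespace ZMod

variable {s : ℕ}

lemma add_self_injective (hs : Odd s) : Function.Injective fun a : ZMod s ↦ a + a := by
  have h2 : IsUnit (2 : ZMod s) := by
    simpa using (ZMod.isUnit_iff_coprime 2 s).mpr (Nat.coprime_two_left.mpr hs)
  intro a b hab
  simp only [← two_mul] at hab
  exact h2.mul_left_cancel hab

/-- The round-robin tournament on `s + 1` players: `a` meets `b` in round `a + b`, and meets the
extra player `none` in round `a + a`, the round in which `a` would otherwise sit out. -/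
def roundRobin : Option (ZMod s) → Option (ZMod s) → ZMod s
  | some a, some b => a + b
  | some a, none => a + a
  | none, some b => b + b
  | none, none => 0

lemma roundRobin_comm (x y : Option (ZMod s)) : roundRobin x y = roundRobin y x := by
  cases x <;> cases y <;> simp [roundRobin, add_comm]

lemma roundRobin_injective (hs : Odd s) {v x y : Option (ZMod s)} (hvx : v ≠ x) (hvy : v ≠ y)
    (h : roundRobin v x = roundRobin v y) : x = y := by
  match v, x, y with
  | none, none, _ | none, _, none => contradiction
  | none, some a, some b => exact congrArg some (add_self_injective hs h)
  | some _, none, none => rfl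
  | some _, none, some _ => exact absurd (congrArg some (add_left_cancel h)) hvy
  | some _, some _, none => exact absurd (congrArg some (add_left_cancel h)).symm hvx
  | some _, some _, some _ => exact congrArg some (add_left_cancel h)

end ZMod

section CompleteGraph
variable {V : Type*} [Finite V]

lemma vdeg_top (v : V) : vdeg (⊤ : SimpleGraph V) v = Nat.card V - 1 := by
  have h : {w | (⊤ : SimpleGraph V).Adj v w} = {v}ᶜ := by ext; simp [eq_comm]
  rw [← Set.ncard_singleton v, ← Set.ncard_compl, ← h]
  rfl

lemma maxDeg_top : maxDeg (⊤ : SimpleGraph V) = Nat.card V - 1 := by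
  rcases isEmpty_or_nonempty V with _ | _
  · simp [maxDeg]
  · simp only [maxDeg, vdeg_top, ciSup_const]

lemma edgeChrom_top_le_of_even (h : Even (Nat.card V)) :
    edgeChrom (⊤ : SimpleGraph V) ≤ (Nat.card V - 1 : ℕ) := by
  rcases Nat.eq_zero_or_pos (Nat.card V) with h0 | hpos
  · have : IsEmpty V := Finite.card_eq_zero_iff.mp h0
    simpa [h0] using edgeChrom_le_card_of_symm_of_injective (α := Empty) ⊤ isEmptyElim
      (fun a ↦ isEmptyElim a) (fun v ↦ isEmptyElim v)
  set s := Nat.card V - 1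
  have hodd : Odd s := Nat.Even.sub_odd hpos h odd_one
  have : NeZero s := ⟨hodd.pos.ne'⟩
  obtain ⟨e⟩ : Nonempty (V ≃ Option (ZMod s)) := Finite.card_eq.mp (by simp; omega)
  simpa using edgeChrom_le_card_of_symm_of_injective ⊤ (fun a b ↦ ZMod.roundRobin (e a) (e b))
    (fun a b ↦ ZMod.roundRobin_comm _ _)
    fun v a b hva hvb h ↦
      e.injective (ZMod.roundRobin_injective hodd (e.injective.ne hva) (e.injective.ne hvb) h)

lemma edgeChrom_top_of_even (h : Even (Nat.card V)) :
    edgeChrom (⊤ : SimpleGraph V) = (Nat.card V - 1 : ℕ) :=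
  (edgeChrom_top_le_of_even h).antisymm (maxDeg_top (V := V) ▸ maxDeg_le_edgeChrom ⊤)

end CompleteGraph

theorem stmt16_general (p m : ℕ) (hp : p.Prime) (hodd : Odd m) :
    edgeChrom (interGraph (ZMod (p ^ m))) =
      ((maxDeg (interGraph (ZMod (p ^ m))) : ℕ) : ℕ∞) ∧
    maxDeg (interGraph (ZMod (p ^ m))) = m - 2 := by
  have : NeZero (p ^ m) := ⟨pow_ne_zero _ hp.ne_zero⟩
  have hcomplete : interGraph (ZMod (p ^ m)) = ⊤ :=
    interGraph_eq_top_of_le_total (ZMod.ideal_le_total_of_prime_pow hp)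
  have hcard := ZMod.card_nontrivial_proper_ideal_prime_pow hp hodd.pos.ne'
  have heven : Even (m - 1) := Nat.Odd.sub_odd hodd odd_one
  rw [hcomplete, edgeChrom_top_of_even (hcard ▸ heven), maxDeg_top, hcard]
  exact ⟨rfl, by omega⟩

theorem stmt16 (p m : ℕ) (hp : p.Prime) (hm : 3 ≤ m) (hodd : Odd m) :
    edgeChrom (interGraph (ZMod (p ^ m))) =
      ((maxDeg (interGraph (ZMod (p ^ m))) : ℕ) : ℕ∞) ∧
    maxDeg (interGraph (ZMod (p ^ m))) = m - 2 :=
  stmt16_general p m hp hodd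
end
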